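/- arXiv:2503.12140 — 5 statements merged into one kernel-verified Lean document; each statement's English description precedes it below -/
import Mathlib

section
/- For all real x ≥ 1, the modified Bessel function of the first kind of order zero satisfies I₀(x) ≥ (5/(6π)) · e^x / √x. -/
open Real MeasureTheory intervalIntegral

/-- The modified Bessel function of the first kind of order zero, via the
integral representation `I₀(x) = (1/π) ∫₀^π e^{x cos θ} dθ`. -/
noncomputable def besselI0 (x : ℝ) : ℝ :=
  (1 / Real.pi) * ∫ θ in (0:ℝ)..Real.pi, Real.exp (x * Real.cos θ)

/-! Since `cos θ ≥ 1 - θ²/2` and `e^t ≥ 1 + t`, the integrand satisfies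
`e^{x cos θ} ≥ eˣ (1 - xθ²/2)`. As the integrand is positive, the integral over `[0, π]` dominates
the one over `[0, a]` with `a = √(2/x) ≤ π`, which gives
`∫₀^π e^{x cos θ} dθ ≥ (2/3) a eˣ = (2√2/3) eˣ/√x`, and `2√2/3 > 5/6`. -/

theorem exp_mul_one_sub_mul_sq_div_two_le {x : ℝ} (hx : 0 ≤ x) (θ : ℝ) :
    exp x * (1 - x * θ ^ 2 / 2) ≤ exp (x * cos θ) := by
  have hcos : 1 - θ ^ 2 / 2 ≤ cos θ := one_sub_sq_div_two_le_cos
  calc exp x * (1 - x * θ ^ 2 / 2)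
      ≤ exp x * (x * (cos θ - 1) + 1) := by gcongr; nlinarith
    _ ≤ exp x * exp (x * (cos θ - 1)) := by gcongr; exact add_one_le_exp _
    _ = exp (x * cos θ) := by rw [← exp_add]; ring_nf

theorem integral_one_sub_mul_sq_div_two (x a : ℝ) :
    ∫ θ in (0:ℝ)..a, (1 - x * θ ^ 2 / 2) = a - x * a ^ 3 / 6 := by
  simp only [mul_div_right_comm x]
  have hsq : Continuous fun θ : ℝ => x / 2 * θ ^ 2 := by fun_prop
  rw [integral_sub intervalIntegrable_const (hsq.intervalIntegrable 0 a),
    intervalIntegral.integral_const_mul]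
  norm_num [integral_pow]
  ring

theorem exp_mul_sub_le_integral_exp_mul_cos {x a : ℝ} (hx : 0 ≤ x) (ha₀ : 0 ≤ a)
    (haπ : a ≤ π) :
    exp x * (a - x * a ^ 3 / 6) ≤ ∫ θ in (0:ℝ)..π, exp (x * cos θ) := by
  calc exp x * (a - x * a ^ 3 / 6)
      = ∫ θ in (0:ℝ)..a, exp x * (1 - x * θ ^ 2 / 2) := by
        rw [intervalIntegral.integral_const_mul, integral_one_sub_mul_sq_div_two]
    _ ≤ ∫ θ in (0:ℝ)..a, exp (x * cos θ) :=
        integral_mono_on ha₀ ((by fun_prop : Continuous _).intervalIntegrable _ _)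
          ((by fun_prop : Continuous _).intervalIntegrable _ _)
          fun θ _ => exp_mul_one_sub_mul_sq_div_two_le hx θ
    _ ≤ ∫ θ in (0:ℝ)..π, exp (x * cos θ) :=
        integral_mono_interval le_rfl ha₀ haπ (.of_forall fun _ => (exp_pos _).le)
          ((by fun_prop : Continuous _).intervalIntegrable _ _)

theorem besselI0_lower_bound {x : ℝ} (hx : 1 ≤ x) :
    (5 / (6 * Real.pi)) * Real.exp x / Real.sqrt x ≤ besselI0 x := by
  have hx₀ : 0 < x := by linarith
  have hsx : 0 < √x := sqrt_pos.2 hx₀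
  have hs2 : √2 ^ 2 = 2 := sq_sqrt zero_le_two
  -- `a` maximizes `a - x a³ / 6`, where the maximum is `2a/3`
  set a := √2 / √x with ha
  have hxa : x * a ^ 2 = 2 := by rw [ha, div_pow, hs2, sq_sqrt hx₀.le]; field_simp
  have haπ : a ≤ π := by
    have : √2 ≤ 2 := by nlinarith [sqrt_nonneg 2]
    have : a ≤ √2 := div_le_self (sqrt_nonneg 2) (one_le_sqrt.2 hx)
    linarith [two_le_pi]
  have hintegral := exp_mul_sub_le_integral_exp_mul_cos hx₀.le (by positivity) haπ
  have h54 : 5 / 4 ≤ √2 := by nlinarith [sqrt_nonneg 2]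
  rw [besselI0, div_le_iff₀ hsx]
  calc 5 / (6 * π) * exp x
      ≤ 1 / π * (exp x * (a - x * a ^ 3 / 6)) * √x := by
        rw [show x * a ^ 3 = 2 * a by linear_combination a * hxa, ha]
        field_simp
        nlinarith [exp_pos x]
    _ ≤ 1 / π * (∫ θ in (0:ℝ)..π, exp (x * cos θ)) * √x := by gcongr
end

section
/- Let p > 1 and α ∈ (0,1], and let w(t) = ( 1/2 + 1/(2^{1/α} + t)^α )^{−1/(p−1)}. Then for all t ≥ 0, w''(t) + w'(t) ≥ 0. -/
open Real

/-!
Write `w t = f (2 ^ (1 / α) + t)` with `f x = (c + x ^ (-α)) ^ (-β)`, `c = 1/2`, `β = 1/(p-1)`.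
With `u = c + x ^ (-α)`, a direct computation gives
`f'' x + f' x = α β u ^ (-β-2) x ^ (-α-2) (α (β+1) x ^ (-α) + u (x - α - 1))`,
which is nonnegative as soon as `x ≥ α + 1`;
and `2 ^ (1/α) ≥ 2 ≥ α + 1` for `α ∈ (0, 1]`.
-/

open Filter Topology

/-- Written with `1 / x ^ α` to match `w` literally; for `x > 0` this is `x ^ (-α)`, the form
used in the derivative formulas. -/
noncomputable def profile (c α β x : ℝ) : ℝ := (c + 1 / x ^ α) ^ (-β)

noncomputable def profileDeriv (c α β x : ℝ) : ℝ :=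
  α * β * (c + x ^ (-α)) ^ (-β - 1) * x ^ (-α - 1)

section Profile

variable {c α β x : ℝ}

lemma hasDerivAt_const_add_rpow_neg (hx : 0 < x) :
    HasDerivAt (fun y => c + y ^ (-α)) (-α * x ^ (-α - 1)) x :=
  (hasDerivAt_rpow_const (Or.inl hx.ne')).const_add c

lemma profile_eventuallyEq (hx : 0 < x) :
    profile c α β =ᶠ[𝓝 x] fun y => (c + y ^ (-α)) ^ (-β) := by
  filter_upwards [Ioi_mem_nhds hx] with y hy
  rw [profile, rpow_neg (le_of_lt hy), one_div]

lemma hasDerivAt_profile (hc : 0 ≤ c) (hx : 0 < x) :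
    HasDerivAt (profile c α β) (profileDeriv c α β x) x := by
  have hu : 0 < c + x ^ (-α) := by positivity
  refine HasDerivAt.congr_of_eventuallyEq ?_ (profile_eventuallyEq hx)
  refine ((hasDerivAt_const_add_rpow_neg hx).rpow_const (Or.inl hu.ne')).congr_deriv ?_
  simp only [profileDeriv]; ring

lemma deriv_profile_eventuallyEq (hc : 0 ≤ c) (hx : 0 < x) :
    deriv (profile c α β) =ᶠ[𝓝 x] profileDeriv c α β := by
  filter_upwards [Ioi_mem_nhds hx] with y hy using (hasDerivAt_profile hc hy).deriv

lemma hasDerivAt_profileDeriv (hc : 0 ≤ c) (hx : 0 < x) :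
    HasDerivAt (profileDeriv c α β)
      (α * β * (c + x ^ (-α)) ^ (-β - 2) * x ^ (-α - 2) *
        (α * (β + 1) * x ^ (-α) - (α + 1) * (c + x ^ (-α)))) x := by
  have hu : 0 < c + x ^ (-α) := by positivity
  have hv := ((hasDerivAt_const_add_rpow_neg (c := c) hx).rpow_const (p := -β - 1)
    (Or.inl hu.ne')).mul (hasDerivAt_rpow_const (p := -α - 1) (Or.inl hx.ne'))
  have hxα : x ^ (-α - 1) = x ^ (-α - 2) * x := by
    rw [← rpow_add_one hx.ne']; ring_nf
  have hxα' : x ^ (-α) = x ^ (-α - 2) * x * x := by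
    rw [← hxα, ← rpow_add_one hx.ne']; ring_nf
  have huβ : (c + x ^ (-α)) ^ (-β - 1) = (c + x ^ (-α)) ^ (-β - 2) * (c + x ^ (-α)) := by
    rw [← rpow_add_one hu.ne']; ring_nf
  have hfun : profileDeriv c α β =
      fun y => α * β * ((c + y ^ (-α)) ^ (-β - 1) * y ^ (-α - 1)) := by
    funext y; simp only [profileDeriv]; ring
  rw [hfun]
  refine (hv.const_mul (α * β)).congr_deriv ?_
  rw [show -β - 1 - 1 = -β - 2 by ring, show -α - 1 - 1 = -α - 2 by ring, huβ, hxα]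
  generalize c + x ^ (-α) = u
  rw [hxα']
  ring

lemma deriv_deriv_profile_add_deriv_profile (hc : 0 ≤ c) (hx : 0 < x) :
    deriv (deriv (profile c α β)) x + deriv (profile c α β) x =
      α * β * (c + x ^ (-α)) ^ (-β - 2) * x ^ (-α - 2) *
        (α * (β + 1) * x ^ (-α) + (c + x ^ (-α)) * (x - α - 1)) := by
  rw [(deriv_profile_eventuallyEq hc hx).deriv_eq, (hasDerivAt_profileDeriv hc hx).deriv,
    (hasDerivAt_profile hc hx).deriv, profileDeriv,
    show -β - 1 = -β - 2 + 1 by ring, rpow_add_one (by positivity : c + x ^ (-α) ≠ 0),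
    show -α - 1 = -α - 2 + 1 by ring, rpow_add_one hx.ne']
  ring

lemma deriv_deriv_profile_add_deriv_profile_nonneg (hα : 0 ≤ α) (hβ : 0 ≤ β) (hc : 0 ≤ c)
    (hx : α + 1 ≤ x) : 0 ≤ deriv (deriv (profile c α β)) x + deriv (profile c α β) x := by
  have hx0 : 0 < x := by linarith
  rw [deriv_deriv_profile_add_deriv_profile hc hx0]
  have : 0 ≤ x - α - 1 := by linarith
  positivity

end Profile

lemma add_one_le_two_rpow_one_div {α : ℝ} (hα : α ∈ Set.Ioc (0 : ℝ) 1) :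
    α + 1 ≤ (2 : ℝ) ^ (1 / α) :=
  calc α + 1 ≤ (2 : ℝ) ^ (1 : ℝ) := by rw [rpow_one]; linarith [hα.2]
    _ ≤ (2 : ℝ) ^ (1 / α) :=
      rpow_le_rpow_of_exponent_le one_le_two (one_le_one_div hα.1 hα.2)

theorem w_second_derivative_ineq {p α : ℝ} (hp : 1 < p) (hα : α ∈ Set.Ioc (0:ℝ) 1) :
    let w : ℝ → ℝ := fun t =>
      ((1:ℝ) / 2 + 1 / ((2:ℝ) ^ (1 / α) + t) ^ α) ^ (-(1 / (p - 1)))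
    ∀ t : ℝ, 0 ≤ t → 0 ≤ deriv (deriv w) t + deriv w t := by
  intro w t _
  have hw : w = fun t => profile (1 / 2) α (1 / (p - 1)) ((2 : ℝ) ^ (1 / α) + t) := rfl
  have hβ : 0 ≤ 1 / (p - 1) := one_div_nonneg.mpr (by linarith)
  rw [hw, funext (deriv_comp_const_add _ _), deriv_comp_const_add]
  exact deriv_deriv_profile_add_deriv_profile_nonneg hα.1.le hβ (by norm_num)
    (by linarith [add_one_le_two_rpow_one_div hα])
end

section
/- Let p > 1, α ∈ (0,1], and let ε > 0 be sufficiently small. Define g(t,ε) = ( p(p+1) ε^{p-1} / ((p-1)² ε^{p-1} t + p² + p) )^{1/(p-1)}, w(t) = ( 1/2 + 1/(2^{1/α} + t)^α )^{−1/(p−1)}, and H(t) = w(t) g(t,ε). Then there is a constant C_{p,α} > 0 depending only on p and α such that for all t > 0: H''(t) + H'(t) + H(t)^p ≥ C_{p,α} (1+t)^{−(α+1)} H(t) + C_{p,α} g(t,ε)^{p−1} H(t). -/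
/-!
Write `m = 1/(p-1)`, `k = (p-1)/(p(p+1))` and `c = 2^{1/α}`. The profile `g` solves the Bernoulli
equation `g' = -k g^p`, so for `H = w g` the product rule gives
`H'' + H' + H^p = (w'' + w') g + (w^p - k w - 2k w') g^p + k² p w g^{2p-1}`,
and it suffices to bound the two brackets below by multiples of `(1+t)^{-(α+1)} w` and `w`.

The weight is `w = φ^{-m}` with `φ(t) = 1/2 + (c+t)^{-α}`. Since `c^α = 2`, `φ ∈ (1/2, 1]` on
`t ≥ 0`, so `w^p = w/φ ≥ w`, and `w' = m α w P / φ` with `P = (c+t)^{-(α+1)} ≤ 1/2`; these give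
`w^p - k w - 2k w' ≥ p/(p+1) w`. Further `w'' + w' = w' ((m+1) α P/φ + 1 - (α+1)/(c+t))`, where the
bracket is at least `α/16`: for `c + t ≥ 2(α+1)` the last two terms contribute `1/2`, otherwise
`c + t < 4` and `P ≥ 1/16`. Finally `P ≥ (1+t)^{-(α+1)} / (2c)`.
-/

open Real Filter Topology

theorem hasDerivAt_deriv_mul {u v u' v' : ℝ → ℝ} {t u'' v'' : ℝ}
    (hu : ∀ᶠ s in 𝓝 t, HasDerivAt u (u' s) s) (hv : ∀ᶠ s in 𝓝 t, HasDerivAt v (v' s) s)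
    (hu' : HasDerivAt u' u'' t) (hv' : HasDerivAt v' v'' t) :
    HasDerivAt (deriv fun s => u s * v s) (u'' * v t + 2 * (u' t * v' t) + u t * v'') t := by
  have hderiv : (deriv fun s => u s * v s) =ᶠ[𝓝 t] fun s => u' s * v s + u s * v' s := by
    filter_upwards [hu, hv] with s hus hvs
    exact (hus.mul hvs).deriv
  exact (((hu'.mul hv.self_of_nhds).add (hu.self_of_nhds.mul hv')).congr_of_eventuallyEq
    hderiv).congr_deriv (by ring)

theorem rpow_one_div_sub_one_rpow {x p : ℝ} (hx : 0 < x) (hp : p ≠ 1) :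
    (x ^ (1 / (p - 1))) ^ p = x ^ (1 / (p - 1)) * x := by
  have hp1 : p - 1 ≠ 0 := sub_ne_zero.2 hp
  rw [← rpow_mul hx.le, ← rpow_add_one hx.ne']
  congr 1
  field_simp
  ring

theorem hasDerivAt_div_rpow_one_div_sub_one {d : ℝ → ℝ} {A B p t : ℝ} (hp : p ≠ 1)
    (hA : 0 < A) (hd : HasDerivAt d B t) (hdt : 0 < d t) :
    HasDerivAt (fun s => (A / d s) ^ (1 / (p - 1)))
      (-(B / ((p - 1) * A)) * ((A / d t) ^ (1 / (p - 1))) ^ p) t := by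
  have hx : 0 < A / d t := div_pos hA hdt
  have hp1 : p - 1 ≠ 0 := sub_ne_zero.2 hp
  refine (((hasDerivAt_const t A).div hd hdt.ne').rpow_const (Or.inl hx.ne')).congr_deriv ?_
  simp only [Pi.div_apply]
  rw [rpow_one_div_sub_one_rpow hx hp, rpow_sub_one hx.ne']
  field_simp
  ring

theorem div_sixteen_le_mul_rpow_add_one_sub {α X : ℝ} (hα0 : 0 < α) (hα1 : α ≤ 1) (hX : 2 ≤ X) :
    α / 16 ≤ α * X ^ (-(α + 1)) + (1 - (α + 1) / X) := by
  have hX0 : 0 < X := by linarith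
  have hdiv : (α + 1) / X ≤ 1 := (div_le_one hX0).2 (by linarith)
  rcases le_or_gt (2 * (α + 1)) X with hbig | hsmall
  · have : (α + 1) / X ≤ 1 / 2 := by rw [div_le_iff₀ hX0]; linarith
    have : 0 ≤ α * X ^ (-(α + 1)) := by positivity
    linarith
  · have h16 : 1 / 16 ≤ X ^ (-(α + 1)) := calc
      (1:ℝ) / 16 = 4 ^ (-2:ℝ) := by norm_num
      _ ≤ 4 ^ (-(α + 1)) := rpow_le_rpow_of_exponent_le (by norm_num) (by linarith)
      _ ≤ X ^ (-(α + 1)) := rpow_le_rpow_of_nonpos hX0 (by linarith) (by linarith)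
    nlinarith

section Weight

variable {c α m t : ℝ}

noncomputable def weightBase (c α s : ℝ) : ℝ := 1 / 2 + 1 / (c + s) ^ α

noncomputable def weight (c α m s : ℝ) : ℝ := weightBase c α s ^ (-m)

noncomputable def weightDeriv (c α m s : ℝ) : ℝ :=
  m * α * (weight c α m s * (weightBase c α s)⁻¹ * (c + s) ^ (-(α + 1)))

theorem weightBase_pos (h : 0 < c + t) : 0 < weightBase c α t := by
  have := rpow_pos_of_pos h α
  unfold weightBase
  positivity

theorem weight_pos (h : 0 < c + t) : 0 < weight c α m t :=
  rpow_pos_of_pos (weightBase_pos h) _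

theorem one_le_inv_weightBase (hc : 0 < c) (hα : 0 ≤ α) (hcα : c ^ α = 2) (ht : 0 ≤ t) :
    1 ≤ (weightBase c α t)⁻¹ := by
  have h : 0 < c + t := by linarith
  refine (one_le_inv₀ (weightBase_pos h)).2 ?_
  have : 2 ≤ (c + t) ^ α := hcα ▸ rpow_le_rpow hc.le (by linarith) hα
  have : 1 / (c + t) ^ α ≤ 1 / 2 := one_div_le_one_div_of_le (by norm_num) this
  unfold weightBase
  linarith

theorem hasDerivAt_weightBase (h : 0 < c + t) :
    HasDerivAt (weightBase c α) (-α * (c + t) ^ (-(α + 1))) t := by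
  have hX := rpow_pos_of_pos h α
  refine (((hasDerivAt_const t (1:ℝ)).div (((hasDerivAt_id' t).const_add c).rpow_const (p := α)
    (Or.inl h.ne')) hX.ne').const_add (1 / 2)).congr_deriv ?_
  rw [rpow_neg h.le, rpow_add_one h.ne', rpow_sub_one h.ne']
  field_simp
  ring

theorem hasDerivAt_weight (h : 0 < c + t) :
    HasDerivAt (weight c α m) (weightDeriv c α m t) t := by
  have hφ := weightBase_pos (α := α) h
  refine ((hasDerivAt_weightBase h).rpow_const (p := -m) (Or.inl hφ.ne')).congr_deriv ?_
  rw [weightDeriv, weight, rpow_sub_one hφ.ne']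
  ring

theorem hasDerivAt_weightDeriv (h : 0 < c + t) :
    HasDerivAt (weightDeriv c α m) (weightDeriv c α m t *
      ((m + 1) * α * (weightBase c α t)⁻¹ * (c + t) ^ (-(α + 1)) - (α + 1) / (c + t))) t := by
  have hφ := weightBase_pos (α := α) h
  have hJ := (hasDerivAt_weightBase (α := α) h).inv hφ.ne'
  have hP := ((hasDerivAt_id' t).const_add c).rpow_const (p := -(α + 1)) (Or.inl h.ne')
  refine ((((hasDerivAt_weight h).mul hJ).mul hP).const_mul (m * α)).congr_deriv ?_
  simp only [Pi.mul_apply, Pi.inv_apply]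
  rw [rpow_sub_one h.ne']
  unfold weightDeriv
  field_simp
  ring

theorem mul_one_add_rpow_mul_weight_le (hα0 : 0 < α) (hα1 : α ≤ 1) (hm : 0 < m) (hc : 2 ≤ c)
    (hcα : c ^ α = 2) (ht : 0 ≤ t) :
    m * α ^ 2 / (32 * c) * (1 + t) ^ (-(α + 1)) * weight c α m t ≤
      weightDeriv c α m t * ((m + 1) * α * (weightBase c α t)⁻¹ * (c + t) ^ (-(α + 1)) -
        (α + 1) / (c + t)) + weightDeriv c α m t := by
  have hX : 0 < c + t := by linarith
  have hW := weight_pos (α := α) (m := m) hX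
  have hJ := one_le_inv_weightBase (by linarith) hα0.le hcα ht
  have hP := rpow_pos_of_pos hX (-(α + 1))
  have hPY : (1 + t) ^ (-(α + 1)) / (2 * c) ≤ (c + t) ^ (-(α + 1)) := by
    have hc2 : c ^ (α + 1) = 2 * c := by rw [rpow_add_one (by linarith), hcα]
    rw [← hc2, div_eq_mul_inv, ← rpow_neg (by linarith), mul_comm,
      ← mul_rpow (by linarith) (by linarith)]
    exact rpow_le_rpow_of_nonpos hX (by nlinarith) (by linarith)
  have hbracket : α / 16 ≤ (m + 1) * α * (weightBase c α t)⁻¹ * (c + t) ^ (-(α + 1)) -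
      (α + 1) / (c + t) + 1 := by
    have := div_sixteen_le_mul_rpow_add_one_sub hα0 hα1 (show 2 ≤ c + t by linarith)
    have : 1 ≤ (m + 1) * (weightBase c α t)⁻¹ := by nlinarith
    nlinarith [mul_pos hα0 hP]
  calc m * α ^ 2 / (32 * c) * (1 + t) ^ (-(α + 1)) * weight c α m t
      = α / 16 * (m * α * weight c α m t * ((1 + t) ^ (-(α + 1)) / (2 * c))) := by ring
    _ ≤ α / 16 * (m * α * weight c α m t * ((weightBase c α t)⁻¹ * (c + t) ^ (-(α + 1)))) := by
      gcongr
      exact hPY.trans (le_mul_of_one_le_left hP.le hJ)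
    _ ≤ ((m + 1) * α * (weightBase c α t)⁻¹ * (c + t) ^ (-(α + 1)) - (α + 1) / (c + t) + 1) *
        (m * α * weight c α m t * ((weightBase c α t)⁻¹ * (c + t) ^ (-(α + 1)))) := by
      gcongr
    _ = _ := by unfold weightDeriv; ring

theorem mul_weight_le_weight_rpow_sub {p : ℝ} (hp : 1 < p) (hα0 : 0 ≤ α) (hα1 : α ≤ 1)
    (hc : 2 ≤ c) (hcα : c ^ α = 2) (ht : 0 ≤ t) :
    p / (p + 1) * weight c α (1 / (p - 1)) t ≤ weight c α (1 / (p - 1)) t ^ p -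
      (p - 1) / (p * (p + 1)) * weight c α (1 / (p - 1)) t -
      2 * ((p - 1) / (p * (p + 1))) * weightDeriv c α (1 / (p - 1)) t := by
  have hX : 0 < c + t := by linarith
  have hW := weight_pos (α := α) (m := 1 / (p - 1)) hX
  have hJ := one_le_inv_weightBase (by linarith) hα0 hcα ht
  have hWp : weight c α (1 / (p - 1)) t ^ p =
      weight c α (1 / (p - 1)) t * (weightBase c α t)⁻¹ := by
    rw [weight, rpow_neg (weightBase_pos hX).le, ← inv_rpow (weightBase_pos hX).le]
    exact rpow_one_div_sub_one_rpow (inv_pos.2 (weightBase_pos hX)) hp.ne'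
  have hαP : α * (c + t) ^ (-(α + 1)) ≤ 1 / 2 := calc
    α * (c + t) ^ (-(α + 1)) ≤ 1 * (c + t) ^ (-(1:ℝ)) :=
      mul_le_mul hα1 (rpow_le_rpow_of_exponent_le (by linarith) (by linarith))
        (rpow_pos_of_pos hX _).le zero_le_one
    _ ≤ 1 / 2 := by rw [one_mul, rpow_neg_one, one_div]; exact inv_anti₀ two_pos (by linarith)
  have hp1 : p - 1 ≠ 0 := by linarith
  have hpp : 0 < p * (p + 1) := by nlinarith
  have hgap : weight c α (1 / (p - 1)) t ^ p -
      (p - 1) / (p * (p + 1)) * weight c α (1 / (p - 1)) t -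
      2 * ((p - 1) / (p * (p + 1))) * weightDeriv c α (1 / (p - 1)) t -
      p / (p + 1) * weight c α (1 / (p - 1)) t =
      weight c α (1 / (p - 1)) t * (((weightBase c α t)⁻¹ - 1) *
        (1 - 2 * (α * (c + t) ^ (-(α + 1))) / (p * (p + 1))) +
        (1 - 2 * (α * (c + t) ^ (-(α + 1)))) / (p * (p + 1))) := by
    rw [hWp, weightDeriv]
    field_simp
    ring
  have h₁ : 0 ≤ 1 - 2 * (α * (c + t) ^ (-(α + 1))) / (p * (p + 1)) := by
    rw [sub_nonneg, div_le_one hpp]; nlinarith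
  have h₂ : 0 ≤ 1 - 2 * (α * (c + t) ^ (-(α + 1))) := by linarith
  rw [← sub_nonneg, hgap]
  exact mul_nonneg hW.le (add_nonneg (mul_nonneg (sub_nonneg.2 hJ) h₁) (div_nonneg h₂ hpp.le))

end Weight

/-- The right-hand side is `(W G)'' + (W G)' + (W G)^p` expanded by the product rule, where
`G' = -k G^p` and `G'' = k² p G^{p-1} G^p`. -/
theorem le_of_weight_bounds {p k C Y W W' W'' G : ℝ} (hk : 0 ≤ k) (hp : 0 ≤ p) (hW : 0 ≤ W)
    (hG : 0 < G) (hw : C * Y * W ≤ W'' + W') (hg : C * W ≤ W ^ p - k * W - 2 * k * W') :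
    C * Y * (W * G) + C * G ^ (p - 1) * (W * G) ≤
      W'' * G + 2 * (W' * (-k * G ^ p)) + W * (-k * (-k * G ^ p * p * G ^ (p - 1))) +
        (W' * G + W * (-k * G ^ p)) + W ^ p * G ^ p := by
  have hGp : G ^ (p - 1) * G = G ^ p := by rw [rpow_sub_one hG.ne', div_mul_cancel₀ _ hG.ne']
  have h₁ := mul_le_mul_of_nonneg_right hw hG.le
  have h₂ := mul_le_mul_of_nonneg_right hg (rpow_pos_of_pos hG p).le
  have h₃ : 0 ≤ k * k * p * W * G ^ p * G ^ (p - 1) := by positivity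
  linear_combination h₁ + h₂ + h₃ + C * W * hGp

theorem H_supersolution {p α : ℝ} (hp : 1 < p) (hα : α ∈ Set.Ioc (0:ℝ) 1) :
    ∃ C > (0:ℝ), ∃ ε₀ > (0:ℝ), ∀ ε : ℝ, 0 < ε → ε ≤ ε₀ →
      let g : ℝ → ℝ := fun t =>
        (p * (p + 1) * ε ^ (p - 1) / ((p - 1) ^ 2 * ε ^ (p - 1) * t + p ^ 2 + p)) ^ (1 / (p - 1))
      let w : ℝ → ℝ := fun t =>
        ((1:ℝ) / 2 + 1 / ((2:ℝ) ^ (1 / α) + t) ^ α) ^ (-(1 / (p - 1)))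
      let H : ℝ → ℝ := fun t => w t * g t
      ∀ t : ℝ, 0 < t →
        C * (1 + t) ^ (-(α + 1)) * H t + C * g t ^ (p - 1) * H t
          ≤ deriv (deriv H) t + deriv H t + H t ^ p := by
  obtain ⟨hα0, hα1⟩ := hα
  have hp0 : 0 < p - 1 := by linarith
  set m : ℝ := 1 / (p - 1)
  set c : ℝ := (2:ℝ) ^ (1 / α)
  have hc : 2 ≤ c := by
    simpa only [rpow_one] using rpow_le_rpow_of_exponent_le one_le_two (one_le_one_div hα0 hα1)
  have hcα : c ^ α = 2 := by rw [← rpow_mul zero_le_two, one_div_mul_cancel hα0.ne', rpow_one]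
  refine ⟨min (m * α ^ 2 / (32 * c)) (p / (p + 1)), by positivity, 1, one_pos, ?_⟩
  intro ε hε _ g w H t ht
  have hg : ∀ s > 0, HasDerivAt g (-((p - 1) / (p * (p + 1))) * g s ^ p) s := fun s hs => by
    refine (hasDerivAt_div_rpow_one_div_sub_one hp.ne' (by positivity)
      (((hasDerivAt_id' s).const_mul _).add_const _ |>.add_const _) (by positivity)).congr_deriv ?_
    congr 2
    field_simp
  have hw : ∀ s > 0, HasDerivAt w (weightDeriv c α m s) s := fun s hs =>
    hasDerivAt_weight (by linarith)
  have hG : 0 < g t := by positivity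
  have hW : 0 < w t := weight_pos (by linarith)
  have hH' : HasDerivAt H _ t := (hw t ht).mul (hg t ht)
  have hH'' : HasDerivAt (deriv H) _ t := hasDerivAt_deriv_mul
    (eventually_of_mem (Ioi_mem_nhds ht) hw) (eventually_of_mem (Ioi_mem_nhds ht) hg)
    (hasDerivAt_weightDeriv (by linarith)) (((hg t ht).rpow_const (Or.inl hG.ne')).const_mul _)
  have hHp : H t ^ p = w t ^ p * g t ^ p := mul_rpow hW.le hG.le
  rw [hH''.deriv, hH'.deriv, hHp]
  have hY : 0 ≤ (1 + t) ^ (-(α + 1)) := (rpow_pos_of_pos (by linarith) _).le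
  exact le_of_weight_bounds (by positivity) (by linarith) hW.le hG
    ((mul_le_mul_of_nonneg_right (mul_le_mul_of_nonneg_right (min_le_left _ _) hY) hW.le).trans
      (mul_one_add_rpow_mul_weight_le hα0 hα1 (by positivity) hc hcα ht.le))
    ((mul_le_mul_of_nonneg_right (min_le_right _ _) hW.le).trans
      (mul_weight_le_weight_rpow_sub hp hα0.le hα1 hc hcα ht.le))
end

section
/- Under the hypotheses of the preceding statement (p > 1, α ∈ (0,1], ε > 0 small, H = wg), H satisfies H(0) = ε, H'(0) = (α/((p−1) 2^{(α+1)/α})) ε − ((p−1)/(p(p+1))) ε^p, and H'(t) + (1/2) H(t) ≥ 0 for all t ≥ 0. -/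
open Real

/-!
Write every derivative as `f t * L` with `L = f'/f` the logarithmic derivative, so that the
logarithmic derivative of `H = w g` is the sum of those of `w` and `g`. The base
`1/2 + (2^{1/α} + t)^{-α}` of `w` decreases and its exponent is negative, so `w'/w ≥ 0`;
and `g'/g = -(p-1) ε^{p-1} / ((p-1)² ε^{p-1} t + p² + p) ≥ -(p-1) ε^{p-1} / (p(p+1)) ≥ -1/2`
by the smallness of `ε`. Hence `H' + H/2 = H (H'/H + 1/2) ≥ 0`. At `t = 0` everything is
explicit because `(2^{1/α})^α = 2`.
-/

theorem HasDerivAt.rpow_const_of_pos {f : ℝ → ℝ} {f' x : ℝ} (q : ℝ) (hf : HasDerivAt f f' x)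
    (hx : 0 < f x) : HasDerivAt (fun y => f y ^ q) (f x ^ q * (q * f' / f x)) x := by
  convert hf.rpow_const (p := q) (Or.inl hx.ne') using 1
  rw [rpow_sub_one hx.ne']
  ring

theorem HasDerivAt.mul_of_logDeriv {f g : ℝ → ℝ} {a b x : ℝ} (hf : HasDerivAt f (f x * a) x)
    (hg : HasDerivAt g (g x * b) x) :
    HasDerivAt (fun y => f y * g y) (f x * g x * (a + b)) x :=
  (hf.mul hg).congr_deriv (by ring)

theorem deriv_add_mul_nonneg_of_hasDerivAt {f : ℝ → ℝ} {t L c : ℝ} (hf : HasDerivAt f (f t * L) t)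
    (hft : 0 ≤ f t) (hL : -c ≤ L) : 0 ≤ deriv f t + c * f t := by
  rw [hf.deriv]
  nlinarith

theorem HasDerivAt.const_div_rpow_const {ℓ : ℝ → ℝ} {A B t : ℝ} (hℓ : HasDerivAt ℓ B t)
    (q : ℝ) (hA : 0 < A) (hℓt : 0 < ℓ t) :
    HasDerivAt (fun t => (A / ℓ t) ^ q) ((A / ℓ t) ^ q * -(q * B / ℓ t)) t := by
  have hu : HasDerivAt (fun t => A / ℓ t) (A * (-B / ℓ t ^ 2)) t := by
    simpa only [div_eq_mul_inv] using (hℓ.fun_inv hℓt.ne').const_mul A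
  convert hu.rpow_const_of_pos q (by positivity) using 2
  field_simp

theorem hasDerivAt_add_one_div_rpow_rpow {c s α t : ℝ} (q : ℝ) (hc : 0 ≤ c) (hst : 0 < s + t) :
    HasDerivAt (fun t => (c + 1 / (s + t) ^ α) ^ (-q))
      ((c + 1 / (s + t) ^ α) ^ (-q) * (q * α / (s + t) ^ (α + 1) / (c + 1 / (s + t) ^ α))) t := by
  have hP : HasDerivAt (fun t => (s + t) ^ α) ((s + t) ^ α * (α * 1 / (s + t))) t :=
    ((hasDerivAt_id t).const_add s).rpow_const_of_pos α hst
  have hv : HasDerivAt (fun t => c + 1 / (s + t) ^ α) (-(α / (s + t) ^ (α + 1))) t := by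
    simp only [one_div]
    refine ((hP.fun_inv (by positivity)).const_add c).congr_deriv ?_
    rw [rpow_add_one hst.ne']
    field_simp
  convert hv.rpow_const_of_pos (-q) (by positivity) using 2
  ring

theorem one_div_sub_one_mul_div_affine_le_half {p c t : ℝ} (hp : 1 < p) (hc : 0 ≤ c)
    (ht : 0 ≤ t) (hsmall : (p - 1) / (p * (p + 1)) * c ≤ 1 / 2) :
    1 / (p - 1) * ((p - 1) ^ 2 * c) / ((p - 1) ^ 2 * c * t + p ^ 2 + p) ≤ 1 / 2 := by
  have hp1 : 0 < p - 1 := sub_pos.mpr hp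
  rw [div_mul_eq_mul_div, div_le_iff₀ (by positivity)] at hsmall
  rw [div_le_iff₀ (by positivity), show 1 / (p - 1) * ((p - 1) ^ 2 * c) = (p - 1) * c by
    field_simp]
  nlinarith [mul_nonneg (mul_nonneg (sq_nonneg (p - 1)) hc) ht]

theorem H_initial_conditions {p α ε : ℝ} (hp : 1 < p) (hα : α ∈ Set.Ioc (0:ℝ) 1)
    (hε : 0 < ε) (hsmall : (p - 1) / (p * (p + 1)) * ε ^ (p - 1) ≤ 1 / 2) :
    let g : ℝ → ℝ := fun t =>
      (p * (p + 1) * ε ^ (p - 1) / ((p - 1) ^ 2 * ε ^ (p - 1) * t + p ^ 2 + p)) ^ (1 / (p - 1))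
    let w : ℝ → ℝ := fun t =>
      ((1:ℝ) / 2 + 1 / ((2:ℝ) ^ (1 / α) + t) ^ α) ^ (-(1 / (p - 1)))
    let H : ℝ → ℝ := fun t => w t * g t
    H 0 = ε ∧
    deriv H 0 = (α / ((p - 1) * (2:ℝ) ^ ((α + 1) / α))) * ε - ((p - 1) / (p * (p + 1))) * ε ^ p ∧
    ∀ t : ℝ, 0 ≤ t → 0 ≤ deriv H t + (1 / 2) * H t := by
  intro g w H
  obtain ⟨hα0, -⟩ := hα
  have hp1 : 0 < p - 1 := sub_pos.mpr hp
  set s : ℝ := (2:ℝ) ^ (1 / α) with hs_def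
  set B : ℝ := (p - 1) ^ 2 * ε ^ (p - 1)
  have hs : 0 < s := by positivity
  have hsα : s ^ α = 2 := by rw [hs_def, one_div, rpow_inv_rpow zero_le_two hα0.ne']
  have hℓ : ∀ t, 0 ≤ t → 0 < B * t + p ^ 2 + p := fun t ht => by positivity
  have hderiv : ∀ t, 0 ≤ t → HasDerivAt H (H t * (1 / (p - 1) * α / (s + t) ^ (α + 1) /
      (1 / 2 + 1 / (s + t) ^ α) + -(1 / (p - 1) * B / (B * t + p ^ 2 + p)))) t := fun t ht =>
    (hasDerivAt_add_one_div_rpow_rpow _ (by norm_num) (by positivity)).mul_of_logDeriv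
      ((((hasDerivAt_id t).const_mul B).add_const _).add_const _ |>.congr_deriv (mul_one B)
        |>.const_div_rpow_const _ (by positivity) (hℓ t ht))
  have hH0 : H 0 = ε := by
    simp only [H, w, g, ← hs_def, add_zero, mul_zero, zero_add, hsα]
    rw [show p ^ 2 + p = p * (p + 1) by ring, mul_div_cancel_left₀ _ (by positivity),
      ← rpow_mul hε.le, mul_one_div_cancel hp1.ne']
    norm_num
  refine ⟨hH0, ?_, fun t ht => ?_⟩
  · rw [(hderiv 0 le_rfl).deriv, hH0, add_zero, mul_zero, zero_add, rpow_add_one hs.ne', hsα,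
      add_div, div_self hα0.ne', rpow_add zero_lt_two, rpow_one, ← sub_add_cancel p 1,
      rpow_add_one hε.ne', add_sub_cancel_right]
    field_simp
    ring
  · refine deriv_add_mul_nonneg_of_hasDerivAt (hderiv t ht) (by simp only [H, w, g]; positivity) ?_
    have hw : 0 ≤ 1 / (p - 1) * α / (s + t) ^ (α + 1) / (1 / 2 + 1 / (s + t) ^ α) := by
      positivity
    have hg := one_div_sub_one_mul_div_affine_le_half hp (by positivity) ht hsmall
    linarith
end

section
/- Let p > 1, ε > 0, t > 0, and let g(t,ε), w(t), H(t,ε) = w(t)g(t,ε) be as above. Then ∂_ε H(t,ε) = H(t,ε) g(t,ε)^{p−1} ε^{−p} and ∂_ε² H(t,ε) = ( p g(t,ε)^{2p−2} ε^{−2p} − p g(t,ε)^{p−1} ε^{−p−1} ) H(t,ε) ≤ 0. -/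
/-!
Writing `c = (p-1)²t / (p(p+1))`, the defining formula says `g(t,ε)^{1-p} = ε^{1-p} + c`.
Differentiating this identity gives the ODE `∂_ε g = g^p ε^{-p}`, and both derivatives of
`H = w g` follow from it by the chain and product rules. Since `c ≥ 0`, also `g ≤ ε`, i.e.
`g^{p-1} ε^{1-p} ≤ 1`, which is exactly the sign of the factor in `∂_ε² H`.
-/

open Real Filter Topology

noncomputable def gProfile (p c x : ℝ) : ℝ := (x ^ (1 - p) + c) ^ (-(1 / (p - 1)))

section Profile

variable {p c x : ℝ}

lemma gProfile_base_pos (hc : 0 ≤ c) (hx : 0 < x) : 0 < x ^ (1 - p) + c :=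
  add_pos_of_pos_of_nonneg (rpow_pos_of_pos hx _) hc

lemma gProfile_pos (hc : 0 ≤ c) (hx : 0 < x) : 0 < gProfile p c x :=
  rpow_pos_of_pos (gProfile_base_pos hc hx) _

lemma gProfile_le (hp : 1 < p) (hc : 0 ≤ c) (hx : 0 < x) : gProfile p c x ≤ x := by
  have hp1 : p - 1 ≠ 0 := by linarith
  calc gProfile p c x ≤ (x ^ (1 - p)) ^ (-(1 / (p - 1))) :=
        rpow_le_rpow_of_nonpos (rpow_pos_of_pos hx _) (le_add_of_nonneg_right hc)
          (neg_nonpos.mpr (one_div_nonneg.mpr (by linarith)))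
    _ = x := by
        rw [← rpow_mul hx.le, show (1 - p) * -(1 / (p - 1)) = 1 by field_simp; ring, rpow_one]

lemma hasDerivAt_gProfile (hp : 1 < p) (hc : 0 ≤ c) (hx : 0 < x) :
    HasDerivAt (gProfile p c) (gProfile p c x ^ p * x ^ (-p)) x := by
  have hp1 : p - 1 ≠ 0 := by linarith
  have hu := gProfile_base_pos (p := p) hc hx
  have h := ((hasDerivAt_rpow_const (p := 1 - p) (Or.inl hx.ne')).add_const c).rpow_const
    (p := -(1 / (p - 1))) (Or.inl hu.ne')
  refine h.congr_deriv ?_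
  rw [gProfile, ← rpow_mul hu.le,
    show -(1 / (p - 1)) * p = -(1 / (p - 1)) - 1 by field_simp; ring, show 1 - p - 1 = -p by ring]
  field_simp
  ring

lemma rpow_div_eq_gProfile {t : ℝ} (hp : 1 < p) (ht : 0 ≤ t) (hx : 0 < x) :
    (p * (p + 1) * x ^ (p - 1) / ((p - 1) ^ 2 * x ^ (p - 1) * t + p ^ 2 + p)) ^ (1 / (p - 1))
      = gProfile p ((p - 1) ^ 2 * t / (p * (p + 1))) x := by
  have hc : 0 ≤ (p - 1) ^ 2 * t / (p * (p + 1)) := by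
    have : 0 < p * (p + 1) := by nlinarith
    positivity
  have hp0 : p * (p + 1) ≠ 0 := by nlinarith
  rw [gProfile, rpow_neg (gProfile_base_pos hc hx).le, ← inv_rpow (gProfile_base_pos hc hx).le,
    show 1 - p = -(p - 1) by ring, rpow_neg hx.le]
  congr 1
  field_simp
  ring

end Profile

section ODE

variable {p x : ℝ} {g : ℝ → ℝ}

lemma hasDerivAt_rpow_mul_rpow_neg_of_hasDerivAt (hx : 0 < x) (hgx : 0 < g x)
    (hg : HasDerivAt g (g x ^ p * x ^ (-p)) x) :
    HasDerivAt (fun y => g y ^ p * y ^ (-p))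
      ((p * g x ^ (2 * p - 2) * x ^ (-(2 * p)) - p * g x ^ (p - 1) * x ^ (-(p + 1))) * g x) x := by
  refine ((hg.rpow_const (p := p) (Or.inl hgx.ne')).mul
    (hasDerivAt_rpow_const (p := -p) (Or.inl hx.ne'))).congr_deriv ?_
  rw [show 2 * p - 2 = (p - 1) + (p - 1) by ring, show -(2 * p) = -p + -p by ring,
    show -p - 1 = -(p + 1) by ring, rpow_add hgx, rpow_add hx, rpow_sub_one hgx.ne']
  field_simp
  ring

lemma mul_rpow_sub_mul_rpow_nonpos_of_le (hp : 1 ≤ p) (hx : 0 < x) {y : ℝ} (hy : 0 < y)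
    (hyx : y ≤ x) :
    p * y ^ (2 * p - 2) * x ^ (-(2 * p)) - p * y ^ (p - 1) * x ^ (-(p + 1)) ≤ 0 := by
  have hratio : (y / x) ^ (p - 1) ≤ 1 :=
    rpow_le_one (div_nonneg hy.le hx.le) ((div_le_one hx).mpr hyx) (by linarith)
  have hsplit : p * y ^ (2 * p - 2) * x ^ (-(2 * p)) - p * y ^ (p - 1) * x ^ (-(p + 1))
      = p * y ^ (p - 1) * x ^ (-(p + 1)) * ((y / x) ^ (p - 1) - 1) := by
    rw [show 2 * p - 2 = (p - 1) + (p - 1) by ring, show -(2 * p) = -(p + 1) + -(p - 1) by ring,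
      rpow_add hy, rpow_add hx, div_rpow hy.le hx.le, rpow_neg hx.le (p - 1)]
    ring
  rw [hsplit]
  exact mul_nonpos_of_nonneg_of_nonpos (by positivity) (by linarith)

variable (w : ℝ) (hpos : ∀ y > 0, 0 < g y) (hg : ∀ y > 0, HasDerivAt g (g y ^ p * y ^ (-p)) y)
include hpos hg

lemma deriv_const_mul_of_ode (hx : 0 < x) :
    deriv (fun e => w * g e) x = w * g x * g x ^ (p - 1) * x ^ (-p) := by
  have hgx := (hpos x hx).ne'
  rw [((hg x hx).const_mul w).deriv, rpow_sub_one hgx]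
  field_simp

lemma deriv_deriv_const_mul_of_ode (hx : 0 < x) :
    deriv (deriv fun e => w * g e) x
      = (p * g x ^ (2 * p - 2) * x ^ (-(2 * p)) - p * g x ^ (p - 1) * x ^ (-(p + 1)))
          * (w * g x) := by
  have hderiv : deriv (fun e => w * g e) =ᶠ[𝓝 x] fun y => w * (g y ^ p * y ^ (-p)) := by
    filter_upwards [lt_mem_nhds hx] with y hy
    exact ((hg y hy).const_mul w).deriv
  rw [hderiv.deriv_eq,
    ((hasDerivAt_rpow_mul_rpow_neg_of_hasDerivAt hx (hpos x hx) (hg x hx)).const_mul w).deriv]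
  ring

end ODE

theorem H_eps_derivatives_general {p α ε t : ℝ} (hp : 1 < p)
    (hε : 0 < ε) (ht : 0 < t) :
    let g : ℝ → ℝ → ℝ := fun t ε =>
      (p * (p + 1) * ε ^ (p - 1) / ((p - 1) ^ 2 * ε ^ (p - 1) * t + p ^ 2 + p)) ^ (1 / (p - 1))
    let w : ℝ → ℝ := fun t =>
      ((1:ℝ) / 2 + 1 / ((2:ℝ) ^ (1 / α) + t) ^ α) ^ (-(1 / (p - 1)))
    let H : ℝ → ℝ → ℝ := fun t ε => w t * g t ε
    deriv (fun e => H t e) ε = H t ε * g t ε ^ (p - 1) * ε ^ (-p) ∧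
    deriv (deriv (fun e => H t e)) ε
        = (p * g t ε ^ (2 * p - 2) * ε ^ (-(2 * p)) - p * g t ε ^ (p - 1) * ε ^ (-(p + 1)))
            * H t ε ∧
    deriv (deriv (fun e => H t e)) ε ≤ 0 := by
  intro g w H
  set c := (p - 1) ^ 2 * t / (p * (p + 1))
  have hc : 0 ≤ c := by
    have : 0 < p * (p + 1) := by nlinarith
    positivity
  have hg_eq : ∀ x > 0, g t x = gProfile p c x := fun x hx => rpow_div_eq_gProfile hp ht.le hx
  have hpos : ∀ x > 0, 0 < g t x := fun x hx => hg_eq x hx ▸ gProfile_pos hc hx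
  have hode : ∀ x > 0, HasDerivAt (g t) (g t x ^ p * x ^ (-p)) x := fun x hx => by
    rw [hg_eq x hx]
    exact (hasDerivAt_gProfile hp hc hx).congr_of_eventuallyEq
      (eventually_of_mem (Ioi_mem_nhds hx) hg_eq)
  have hw : 0 ≤ w t := rpow_nonneg (by positivity) _
  have hle : g t ε ≤ ε := hg_eq ε hε ▸ gProfile_le hp hc hε
  have hsecond := deriv_deriv_const_mul_of_ode (w t) hpos hode hε
  refine ⟨deriv_const_mul_of_ode (w t) hpos hode hε, hsecond, ?_⟩
  rw [hsecond]
  exact mul_nonpos_of_nonpos_of_nonneg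
    (mul_rpow_sub_mul_rpow_nonpos_of_le hp.le hε (hpos ε hε) hle)
    (mul_nonneg hw (hpos ε hε).le)

theorem H_eps_derivatives {p α ε t : ℝ} (hp : 1 < p) (hα : α ∈ Set.Ioc (0:ℝ) 1)
    (hε : 0 < ε) (ht : 0 < t) :
    let g : ℝ → ℝ → ℝ := fun t ε =>
      (p * (p + 1) * ε ^ (p - 1) / ((p - 1) ^ 2 * ε ^ (p - 1) * t + p ^ 2 + p)) ^ (1 / (p - 1))
    let w : ℝ → ℝ := fun t =>
      ((1:ℝ) / 2 + 1 / ((2:ℝ) ^ (1 / α) + t) ^ α) ^ (-(1 / (p - 1)))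
    let H : ℝ → ℝ → ℝ := fun t ε => w t * g t ε
    deriv (fun e => H t e) ε = H t ε * g t ε ^ (p - 1) * ε ^ (-p) ∧
    deriv (deriv (fun e => H t e)) ε
        = (p * g t ε ^ (2 * p - 2) * ε ^ (-(2 * p)) - p * g t ε ^ (p - 1) * ε ^ (-(p + 1)))
            * H t ε ∧
    deriv (deriv (fun e => H t e)) ε ≤ 0 :=
  H_eps_derivatives_general hp hε ht
end
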